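/- Let p be a prime and t ≥ 0 a real number. If X ⊆ R^k is a finite Euclidean sub-p-toral set, then X × {0, t} ⊆ R^{k+1} is Euclidean sub-p-toral. -/

import Mathlib

/-- A finite set `X ⊆ ℝ^k` is *Euclidean sub-p-toral* if some isometric copy of `X`
in a possibly larger `ℝ^n` is contained in an orbit of a finite group of isometries
of `ℝ^n` isomorphic to `(ℤ/p)^α`. -/
def EuclideanSubPToral (p : ℕ) {k : ℕ} (X : Set (EuclideanSpace ℝ (Fin k))) : Prop :=
  ∃ n : ℕ, k ≤ n ∧
    ∃ ι : X → EuclideanSpace ℝ (Fin n),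
      (∀ x y : X, dist (ι x) (ι y) = dist (x : EuclideanSpace ℝ (Fin k)) y) ∧
      ∃ (G : Subgroup (EuclideanSpace ℝ (Fin n) ≃ᵢ EuclideanSpace ℝ (Fin n))) (α : ℕ),
        Nonempty (G ≃* Multiplicative (Fin α → ZMod p)) ∧
        ∃ v : EuclideanSpace ℝ (Fin n), ∀ x : X, ∃ g ∈ G,
          (g : EuclideanSpace ℝ (Fin n) ≃ᵢ EuclideanSpace ℝ (Fin n)) v = ι x

/-- The identification `ℝ^k × ℝ = ℝ^{k+1}`, appending a last coordinate. -/
noncomputable def snocPoint {k : ℕ} (x : EuclideanSpace ℝ (Fin k)) (s : ℝ) :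
    EuclideanSpace ℝ (Fin (k + 1)) :=
  (WithLp.equiv 2 (Fin (k + 1) → ℝ)).symm (Fin.snoc ((WithLp.equiv 2 (Fin k → ℝ)) x) s)

/-! An isometric copy of `X` lies in an orbit `G • v ⊆ ℝⁿ` with `G ≅ (ℤ/p)^α`. The pair `{0, t}`
lies isometrically in the orbit of a point `w ∈ ℂ` under the rotations by `p`-th roots of unity
`ζ`, once `|w| · |1 - ζ| = t`. Acting by `G × μ_p` on the `L²` product `ℝⁿ × ℂ`, a Euclidean
space of dimension `n + 2`, the orbit of `(v, w)` then contains an isometric copy of `X × {0, t}`,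
and `G × μ_p ≅ (ℤ/p)^(α+1)`. -/

def IsElementaryAbelian (p : ℕ) (H : Type*) [Group H] : Prop :=
  ∃ α : ℕ, Nonempty (H ≃* Multiplicative (Fin α → ZMod p))

namespace IsElementaryAbelian

variable {p : ℕ} {H K : Type*} [Group H] [Group K]

theorem of_mulEquiv (e : H ≃* K) (hK : IsElementaryAbelian p K) : IsElementaryAbelian p H :=
  let ⟨α, ⟨f⟩⟩ := hK
  ⟨α, ⟨e.trans f⟩⟩

theorem prod (hH : IsElementaryAbelian p H) (hK : IsElementaryAbelian p K) :
    IsElementaryAbelian p (H × K) := by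
  obtain ⟨α, ⟨e⟩⟩ := hH
  obtain ⟨β, ⟨f⟩⟩ := hK
  refine ⟨α + β, ⟨(e.prodCongr f).trans <| (MulEquiv.prodMultiplicative _ _).symm.trans ?_⟩⟩
  exact ((RingEquiv.sumArrowEquivProdArrow (Fin α) (Fin β) (ZMod p)).symm.toAddEquiv.trans
    (AddEquiv.arrowCongr finSumFinEquiv (AddEquiv.refl (ZMod p)))).toMultiplicative

end IsElementaryAbelian

theorem isElementaryAbelian_multiplicative_zmod (p : ℕ) :
    IsElementaryAbelian p (Multiplicative (ZMod p)) :=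
  ⟨1, ⟨(AddEquiv.funUnique (Fin 1) (ZMod p)).symm.toMultiplicative⟩⟩

def IsometryEquiv.conjMulEquiv {E F : Type*} [PseudoEMetricSpace E] [PseudoEMetricSpace F]
    (e : E ≃ᵢ F) : (E ≃ᵢ E) ≃* (F ≃ᵢ F) where
  toFun g := (e.symm.trans g).trans e
  invFun g := (e.trans g).trans e.symm
  left_inv g := by ext; simp
  right_inv g := by ext; simp
  map_mul' g h := by ext; simp [IsometryEquiv.mul_apply]

@[simps]
def IsometryEquiv.withLpProdCongrHom (q : ENNReal) [Fact (1 ≤ q)] (E F : Type*)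
    [PseudoEMetricSpace E] [PseudoEMetricSpace F] :
    (E ≃ᵢ E) × (F ≃ᵢ F) →* (WithLp q (E × F) ≃ᵢ WithLp q (E × F)) where
  toFun g := g.1.withLpProdCongr q g.2
  map_one' := rfl
  map_mul' _ _ := rfl

theorem IsometryEquiv.withLpProdCongrHom_injective (q : ENNReal) [Fact (1 ≤ q)] (E F : Type*)
    [PseudoEMetricSpace E] [PseudoEMetricSpace F] [Nonempty E] [Nonempty F] :
    Function.Injective (withLpProdCongrHom q E F) := by
  intro g h hgh
  have hx : ∀ x y, (g.1 x, g.2 y) = (h.1 x, h.2 y) := fun x y =>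
    congrArg WithLp.ofLp (congrArg (fun f => f (WithLp.toLp q (x, y))) hgh)
  exact Prod.ext (IsometryEquiv.ext fun x => congrArg Prod.fst (hx x (Classical.arbitrary F)))
    (IsometryEquiv.ext fun y => congrArg Prod.snd (hx (Classical.arbitrary E) y))

def IsSubPToralIn (p : ℕ) (E : Type*) [PseudoMetricSpace E] {Y : Type*} [PseudoMetricSpace Y]
    (X : Set Y) : Prop :=
  ∃ ι : X → E, Isometry ι ∧ ∃ G : Subgroup (E ≃ᵢ E), IsElementaryAbelian p G ∧
    ∃ v : E, ∀ x : X, ∃ g ∈ G, g v = ι x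

theorem euclideanSubPToral_iff {p k : ℕ} {X : Set (EuclideanSpace ℝ (Fin k))} :
    EuclideanSubPToral p X ↔ ∃ n, k ≤ n ∧ IsSubPToralIn p (EuclideanSpace ℝ (Fin n)) X := by
  simp only [EuclideanSubPToral, IsSubPToralIn, IsElementaryAbelian, isometry_iff_dist_eq,
    Subtype.dist_eq]
  grind

namespace IsSubPToralIn

variable {p : ℕ} {Y Z W : Type*} [PseudoMetricSpace Y] [PseudoMetricSpace Z]
  [PseudoMetricSpace W] {X : Set Y} {S : Set Z}

theorem of_isometryEquiv {E F : Type*} [PseudoMetricSpace E] [PseudoMetricSpace F] (e : E ≃ᵢ F)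
    (h : IsSubPToralIn p E X) : IsSubPToralIn p F X := by
  obtain ⟨ι, hι, G, hG, v, hv⟩ := h
  refine ⟨e ∘ ι, e.isometry.comp hι, G.map e.conjMulEquiv.toMonoidHom,
    hG.of_mulEquiv (G.equivMapOfInjective _ e.conjMulEquiv.injective).symm, e v, fun x => ?_⟩
  obtain ⟨g, hg, hgv⟩ := hv x
  exact ⟨e.conjMulEquiv g, G.mem_map_of_mem _ hg, by simp [IsometryEquiv.conjMulEquiv, hgv]⟩

theorem image2 {E F : Type*} [SeminormedAddCommGroup E] [SeminormedAddCommGroup F]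
    {c : Y → Z → W}
    (hc : ∀ y y' z z', dist (c y z) (c y' z') = √(dist y y' ^ 2 + dist z z' ^ 2))
    (hX : IsSubPToralIn p E X) (hS : IsSubPToralIn p F S) :
    IsSubPToralIn p (WithLp 2 (E × F)) (Set.image2 c X S) := by
  obtain ⟨ι, hι, G, hG, v, hv⟩ := hX
  obtain ⟨κ, hκ, H, hH, u, hu⟩ := hS
  choose y hy z hz hyz using fun w : Set.image2 c X S => w.2
  refine ⟨fun w => WithLp.toLp 2 (ι ⟨y w, hy w⟩, κ ⟨z w, hz w⟩), ?_,
    (G.prod H).map (IsometryEquiv.withLpProdCongrHom 2 E F),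
    (hG.prod hH).of_mulEquiv ((Subgroup.equivMapOfInjective _ _
      (IsometryEquiv.withLpProdCongrHom_injective 2 E F)).symm.trans (G.prodEquiv H)),
    WithLp.toLp 2 (v, u), fun w => ?_⟩
  · refine Isometry.of_dist_eq fun w w' => ?_
    rw [WithLp.prod_dist_eq_of_L2, WithLp.toLp_fst, WithLp.toLp_fst, WithLp.toLp_snd,
      WithLp.toLp_snd, hι.dist_eq, hκ.dist_eq, Subtype.dist_eq w, ← hyz, ← hyz, hc]
    rfl
  · obtain ⟨g, hg, hgv⟩ := hv ⟨y w, hy w⟩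
    obtain ⟨h, hh, hhu⟩ := hu ⟨z w, hz w⟩
    exact ⟨_, Subgroup.mem_map_of_mem _ (Subgroup.mem_prod.2 ⟨hg, hh⟩ : (g, h) ∈ G.prod H),
      by simp [hgv, hhu]⟩

theorem euclideanSubPToral {E : Type*} [NormedAddCommGroup E] [InnerProductSpace ℝ E]
    [FiniteDimensional ℝ E] {k : ℕ} {X : Set (EuclideanSpace ℝ (Fin k))} (h : IsSubPToralIn p E X)
    (hk : k ≤ Module.finrank ℝ E) : EuclideanSubPToral p X :=
  euclideanSubPToral_iff.2
    ⟨_, hk, h.of_isometryEquiv (stdOrthonormalBasis ℝ E).repr.toIsometryEquiv⟩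

end IsSubPToralIn

theorem isometry_ite_pair {Y E : Type*} [PseudoMetricSpace Y] [PseudoMetricSpace E]
    [DecidableEq Y] {a b : Y} {u u' : E} (h : dist u u' = dist a b) :
    Isometry fun x : ({a, b} : Set Y) => if (x : Y) = a then u else u' := by
  refine Isometry.of_dist_eq fun ⟨x, hx⟩ ⟨y, hy⟩ => ?_
  rw [Set.mem_insert_iff, Set.mem_singleton_iff] at hx hy
  by_cases hba : b = a
  · obtain rfl : x = y := by grind
    simp
  · rcases hx with hx | hx <;> rcases hy with hy | hy <;>
      simp [Subtype.dist_eq, hx, hy, hba, h, dist_comm u', dist_comm b]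

noncomputable def circleRotation : Circle →* (ℂ ≃ᵢ ℂ) where
  toFun c := (rotation c).toIsometryEquiv
  map_one' := by ext; simp
  map_mul' _ _ := by ext; simp

@[simp]
theorem circleRotation_apply (c : Circle) (z : ℂ) : circleRotation c z = c * z := rfl

theorem isSubPToralIn_pair {p : ℕ} (hp : 1 < p) {Y : Type*} [PseudoMetricSpace Y] (a b : Y) :
    IsSubPToralIn p ℂ ({a, b} : Set Y) := by
  classical
  have : NeZero p := ⟨by omega⟩
  have : Fact (1 < p) := ⟨hp⟩
  set ζ : Circle := ZMod.toCircle (1 : ZMod p)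
  set ρ : Multiplicative (ZMod p) →* (ℂ ≃ᵢ ℂ) := circleRotation.comp ZMod.toCircle.toMonoidHom
  have hρ : Function.Injective ρ := fun x y h =>
    Multiplicative.toAdd.injective <| ZMod.injective_toCircle <| Circle.coe_inj.1 <| by
      simpa [ρ] using congrArg (fun g : ℂ ≃ᵢ ℂ => g 1) h
  have hζ : ‖1 - (ζ : ℂ)‖ ≠ 0 := by
    rw [norm_ne_zero_iff, sub_ne_zero, ne_comm, ← Circle.coe_one, ne_eq, Circle.coe_inj,
      ← (ZMod.toCircle (N := p)).map_zero_eq_one, ZMod.injective_toCircle.eq_iff]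
    exact one_ne_zero
  obtain ⟨w, hw⟩ : ∃ w : ℂ, dist w (ζ * w) = dist a b := by
    refine ⟨(dist a b / ‖1 - (ζ : ℂ)‖ : ℝ), ?_⟩
    rw [dist_eq_norm, ← one_sub_mul, norm_mul, Complex.norm_real,
      Real.norm_of_nonneg (by positivity), mul_div_cancel₀ _ hζ]
  refine ⟨fun x => if (x : Y) = a then w else ζ * w, ?_, ρ.range,
    (isElementaryAbelian_multiplicative_zmod p).of_mulEquiv (MonoidHom.ofInjective hρ).symm, w, ?_⟩
  · exact isometry_ite_pair hw
  · rintro ⟨x, hx⟩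
    by_cases hxa : x = a
    · exact ⟨1, ρ.range.one_mem, by simp [hxa]⟩
    · exact ⟨ρ (.ofAdd 1), ⟨_, rfl⟩, by simp [hxa, ρ, ζ]⟩

theorem dist_snocPoint {k : ℕ} (x x' : EuclideanSpace ℝ (Fin k)) (s s' : ℝ) :
    dist (snocPoint x s) (snocPoint x' s') = √(dist x x' ^ 2 + dist s s' ^ 2) := by
  simp only [EuclideanSpace.dist_eq, Fin.sum_univ_castSucc, snocPoint, Real.dist_eq, sq_abs]
  rw [Real.sq_sqrt (by positivity)]
  simp

theorem euclideanSubPToral_prod_pair_general (p : ℕ) (hp : p.Prime) {k : ℕ} (t : ℝ)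
    (X : Set (EuclideanSpace ℝ (Fin k)))
    (hX : EuclideanSubPToral p X) :
    EuclideanSubPToral p {z : EuclideanSpace ℝ (Fin (k + 1)) |
      ∃ x ∈ X, ∃ s ∈ ({0, t} : Set ℝ), z = snocPoint x s} := by
  obtain ⟨n, hkn, hX⟩ := euclideanSubPToral_iff.1 hX
  have hprod := hX.image2 dist_snocPoint (isSubPToralIn_pair hp.one_lt 0 t)
  have hdim : Module.finrank ℝ (WithLp 2 (EuclideanSpace ℝ (Fin n) × ℂ)) = n + 2 := by
    rw [(WithLp.linearEquiv 2 ℝ _).finrank_eq, Module.finrank_prod, finrank_euclideanSpace_fin,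
      Complex.finrank_real_complex]
  have hset : Set.image2 snocPoint X {0, t} =
      {z | ∃ x ∈ X, ∃ s ∈ ({0, t} : Set ℝ), z = snocPoint x s} := by
    ext; simp only [Set.mem_image2, Set.mem_ofPred_eq, eq_comm]
  rw [← hset]
  exact hprod.euclideanSubPToral (by omega)

/-- **Lemma 6.** If `X ⊆ ℝ^k` is a finite Euclidean sub-p-toral set and `t ≥ 0`, then
`X × {0, t} ⊆ ℝ^{k+1}` is Euclidean sub-p-toral. -/
theorem euclideanSubPToral_prod_pair (p : ℕ) (hp : p.Prime) {k : ℕ} (t : ℝ) (ht : 0 ≤ t)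
    (X : Set (EuclideanSpace ℝ (Fin k))) (hXfin : X.Finite)
    (hX : EuclideanSubPToral p X) :
    EuclideanSubPToral p {z : EuclideanSpace ℝ (Fin (k + 1)) |
      ∃ x ∈ X, ∃ s ∈ ({0, t} : Set ℝ), z = snocPoint x s} :=
  euclideanSubPToral_prod_pair_general p hp t X hX
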